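/- Let C and D be Z-type complexes over 𝔽₂, let V be a common separated logical operator subcomplex of C (determined by u) and of D (determined by v), and let Q be the Z̄-merged complex with quotient map coeq₀ : C₀ ⊕ D₀ → Q₀. Then coeq₀ maps ker(∂₋₁^C ⊕ ∂₋₁^D) into ker ∂₋₁^Q and im(∂₀^C ⊕ ∂₀^D) into im ∂₀^Q, so it induces a linear map H₀(C) ⊕ H₀(D) → H₀(Q); this induced map is surjective, and its kernel is the one-dimensional subspace spanned by ([u],[v]). -/

import Mathlib

/-!
A cycle of `Q₀` lifts to a pair `(c, d)` whose boundary `(∂c, ∂d)` is glued, i.e. equals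
`(∂ f₀ s, ∂ g₀ s)` for some `s`; correcting the lift by the glued element `(f₀ s, g₀ s)` makes it a
pair of cycles, so the induced map is onto. A pair of classes `([a], [b])` dies in `H₀(Q)` exactly
when `(a, b)` is a boundary plus a glued element, so the kernel consists of the pairs
`([f₀ s], [g₀ s])` with both entries cycles. Since `supp (f₀ s) ⊆ supp u`, separation makes such a
pair either `(0, 0)` or `([u], [v])`.
-/

abbrev F2 := ZMod 2

/-- Coordinate inclusion of 𝔽₂^α into 𝔽₂^β along an embedding ι : α ↪ β. -/
noncomputable def incl {α β : Type} [Fintype α] [DecidableEq β] (ι : α ↪ β) :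
    (α → F2) →ₗ[F2] (β → F2) :=
  Matrix.mulVecLin (Matrix.of fun j i => if j = ι i then 1 else 0)

open LinearMap Submodule

abbrev H₀ {R M₁ M₀ Mₘ : Type*} [Ring R] [AddCommGroup M₁] [AddCommGroup M₀] [AddCommGroup Mₘ]
    [Module R M₁] [Module R M₀] [Module R Mₘ] (d₀ : M₁ →ₗ[R] M₀) (dₘ : M₀ →ₗ[R] Mₘ) :=
  ker dₘ ⧸ (range d₀).comap (ker dₘ).subtype

namespace H₀

variable {R M₁ M₀ Mₘ : Type*} [Ring R] [AddCommGroup M₁] [AddCommGroup M₀] [AddCommGroup Mₘ]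
    [Module R M₁] [Module R M₀] [Module R Mₘ] {d₀ : M₁ →ₗ[R] M₀} {dₘ : M₀ →ₗ[R] Mₘ}

theorem mk_eq_zero_iff (a : ker dₘ) :
    (Submodule.Quotient.mk a : H₀ d₀ dₘ) = 0 ↔ (a : M₀) ∈ range d₀ :=
  Quotient.mk_eq_zero _

theorem mk_eq_mk_iff (a b : ker dₘ) :
    (Submodule.Quotient.mk a : H₀ d₀ dₘ) = Submodule.Quotient.mk b ↔ (a : M₀) - b ∈ range d₀ :=
  Submodule.Quotient.eq _

end H₀

abbrev gluing {R T C D : Type*} [Ring R] [AddCommGroup T] [AddCommGroup C] [AddCommGroup D]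
    [Module R T] [Module R C] [Module R D] (iC : T →ₗ[R] C) (iD : T →ₗ[R] D) :
    Submodule R (C × D) :=
  range (iC.prod iD)

section Pushout

variable {R T C₁ C₀ Cₘ D₁ D₀ Dₘ : Type*} [Ring R] [AddCommGroup T]
  [AddCommGroup C₁] [AddCommGroup C₀] [AddCommGroup Cₘ]
  [AddCommGroup D₁] [AddCommGroup D₀] [AddCommGroup Dₘ] [Module R T]
  [Module R C₁] [Module R C₀] [Module R Cₘ] [Module R D₁] [Module R D₀] [Module R Dₘ]
  {dC₀ : C₁ →ₗ[R] C₀} {dCₘ : C₀ →ₗ[R] Cₘ} {dD₀ : D₁ →ₗ[R] D₀} {dDₘ : D₀ →ₗ[R] Dₘ}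
  {iC : T →ₗ[R] C₀} {iD : T →ₗ[R] D₀}
  {dQ : (C₀ × D₀) ⧸ gluing iC iD →ₗ[R] (Cₘ × Dₘ) ⧸ gluing (dCₘ ∘ₗ iC) (dDₘ ∘ₗ iD)}

theorem gluing_mkQ_mem_ker_iff
    (hdQ : dQ ∘ₗ (gluing iC iD).mkQ = (gluing (dCₘ ∘ₗ iC) (dDₘ ∘ₗ iD)).mkQ ∘ₗ dCₘ.prodMap dDₘ)
    (x : C₀ × D₀) :
    (gluing iC iD).mkQ x ∈ ker dQ ↔ ∃ s, dCₘ (iC s) = dCₘ x.1 ∧ dDₘ (iD s) = dDₘ x.2 := by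
  rw [mem_ker, ← comp_apply, hdQ, comp_apply, mkQ_apply, Quotient.mk_eq_zero]
  simp [Prod.ext_iff]

theorem gluing_mkQ_mem_ker_of_mem_ker
    (hdQ : dQ ∘ₗ (gluing iC iD).mkQ = (gluing (dCₘ ∘ₗ iC) (dDₘ ∘ₗ iD)).mkQ ∘ₗ dCₘ.prodMap dDₘ)
    {x : C₀ × D₀} (hx : x ∈ ker (dCₘ.prodMap dDₘ)) : (gluing iC iD).mkQ x ∈ ker dQ := by
  rw [mem_ker, ← comp_apply, hdQ, comp_apply, mem_ker.1 hx, map_zero]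

theorem exists_cycles_gluing_mkQ_eq
    (hdQ : dQ ∘ₗ (gluing iC iD).mkQ = (gluing (dCₘ ∘ₗ iC) (dDₘ ∘ₗ iD)).mkQ ∘ₗ dCₘ.prodMap dDₘ)
    {q : (C₀ × D₀) ⧸ gluing iC iD} (hq : q ∈ ker dQ) :
    ∃ a ∈ ker dCₘ, ∃ b ∈ ker dDₘ, (gluing iC iD).mkQ (a, b) = q := by
  obtain ⟨⟨c, d⟩, rfl⟩ := Submodule.Quotient.mk_surjective _ q
  obtain ⟨s, hsC, hsD⟩ := (gluing_mkQ_mem_ker_iff hdQ (c, d)).1 hq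
  refine ⟨c - iC s, by simp [hsC], d - iD s, by simp [hsD], ?_⟩
  rw [mkQ_apply, Submodule.Quotient.eq]
  exact ⟨-s, by simp⟩

theorem gluing_mkQ_mem_boundaries_iff (x : C₀ × D₀) :
    (gluing iC iD).mkQ x ∈ range ((gluing iC iD).mkQ ∘ₗ dC₀.prodMap dD₀) ↔
      ∃ s, x.1 - iC s ∈ range dC₀ ∧ x.2 - iD s ∈ range dD₀ := by
  constructor
  · rintro ⟨⟨y, z⟩, hyz⟩
    obtain ⟨s, hs⟩ := (Submodule.Quotient.eq _).1 hyz
    have hsC : iC s = dC₀ y - x.1 := congrArg Prod.fst hs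
    have hsD : iD s = dD₀ z - x.2 := congrArg Prod.snd hs
    exact ⟨-s, ⟨y, by simp [hsC]⟩, ⟨z, by simp [hsD]⟩⟩
  · rintro ⟨s, ⟨y, hy⟩, ⟨z, hz⟩⟩
    refine ⟨(y, z), (Submodule.Quotient.eq _).2 ⟨-s, ?_⟩⟩
    simp [hy, hz, Prod.ext_iff]

def IsInducedOnH₀ (dQ : (C₀ × D₀) ⧸ gluing iC iD →ₗ[R] (Cₘ × Dₘ) ⧸ gluing (dCₘ ∘ₗ iC) (dDₘ ∘ₗ iD))
    (φ : H₀ dC₀ dCₘ × H₀ dD₀ dDₘ →ₗ[R] H₀ ((gluing iC iD).mkQ ∘ₗ dC₀.prodMap dD₀) dQ) : Prop :=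
  ∀ (a : ker dCₘ) (b : ker dDₘ) (x : ker dQ),
    (x : (C₀ × D₀) ⧸ gluing iC iD) = (gluing iC iD).mkQ ((a : C₀), (b : D₀)) →
      φ (Submodule.Quotient.mk a, Submodule.Quotient.mk b) = Submodule.Quotient.mk x

namespace IsInducedOnH₀

variable {φ : H₀ dC₀ dCₘ × H₀ dD₀ dDₘ →ₗ[R] H₀ ((gluing iC iD).mkQ ∘ₗ dC₀.prodMap dD₀) dQ}

theorem surjective
    (hdQ : dQ ∘ₗ (gluing iC iD).mkQ = (gluing (dCₘ ∘ₗ iC) (dDₘ ∘ₗ iD)).mkQ ∘ₗ dCₘ.prodMap dDₘ)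
    (hφ : IsInducedOnH₀ dQ φ) : Function.Surjective φ := by
  intro q
  obtain ⟨x, rfl⟩ := Submodule.Quotient.mk_surjective _ q
  obtain ⟨a, ha, b, hb, hab⟩ := exists_cycles_gluing_mkQ_eq hdQ x.2
  exact ⟨(Submodule.Quotient.mk ⟨a, ha⟩, Submodule.Quotient.mk ⟨b, hb⟩), hφ _ _ _ hab.symm⟩

theorem mem_ker_iff (hC : dCₘ ∘ₗ dC₀ = 0) (hD : dDₘ ∘ₗ dD₀ = 0)
    (hdQ : dQ ∘ₗ (gluing iC iD).mkQ = (gluing (dCₘ ∘ₗ iC) (dDₘ ∘ₗ iD)).mkQ ∘ₗ dCₘ.prodMap dDₘ)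
    (hφ : IsInducedOnH₀ dQ φ) (z : H₀ dC₀ dCₘ × H₀ dD₀ dDₘ) :
    z ∈ ker φ ↔ ∃ s, ∃ (hsC : iC s ∈ ker dCₘ) (hsD : iD s ∈ ker dDₘ),
      z = (Submodule.Quotient.mk ⟨iC s, hsC⟩, Submodule.Quotient.mk ⟨iD s, hsD⟩) := by
  constructor
  · intro hz
    obtain ⟨z₁, z₂⟩ := z
    obtain ⟨a, rfl⟩ := Submodule.Quotient.mk_surjective _ z₁
    obtain ⟨b, rfl⟩ := Submodule.Quotient.mk_surjective _ z₂
    have hab : (gluing iC iD).mkQ ((a : C₀), (b : D₀)) ∈ ker dQ :=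
      gluing_mkQ_mem_ker_of_mem_ker hdQ (by simp)
    rw [mem_ker, hφ a b ⟨_, hab⟩ rfl, H₀.mk_eq_zero_iff] at hz
    obtain ⟨s, hsC, hsD⟩ := (gluing_mkQ_mem_boundaries_iff _).1 hz
    have hcycC : iC s ∈ ker dCₘ := by
      simpa using sub_mem a.2 (range_le_ker_iff.2 hC hsC)
    have hcycD : iD s ∈ ker dDₘ := by
      simpa using sub_mem b.2 (range_le_ker_iff.2 hD hsD)
    exact ⟨s, hcycC, hcycD, Prod.ext ((H₀.mk_eq_mk_iff _ _).2 hsC) ((H₀.mk_eq_mk_iff _ _).2 hsD)⟩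
  · rintro ⟨s, hsC, hsD, rfl⟩
    have hglued : (gluing iC iD).mkQ (iC s, iD s) = 0 :=
      (Submodule.Quotient.mk_eq_zero _).2 ⟨s, rfl⟩
    rw [mem_ker, hφ _ _ 0 hglued.symm, Submodule.Quotient.mk_zero]

end IsInducedOnH₀

end Pushout

section incl

variable {α β : Type} [Fintype α] [DecidableEq β] (ι : α ↪ β)

theorem incl_apply_self (s : α → F2) (i : α) : incl ι s (ι i) = s i := by
  simp only [incl, Matrix.mulVecLin_apply, Matrix.mulVec, dotProduct, Matrix.of_apply, ite_mul,
    one_mul, zero_mul]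
  rw [Finset.sum_eq_single i (fun b _ hb => if_neg (ι.injective.ne hb.symm)) (by simp), if_pos rfl]

theorem incl_apply_of_notMem_range (s : α → F2) {j : β} (hj : j ∉ Set.range ι) :
    incl ι s j = 0 := by
  simp only [Set.mem_range, not_exists] at hj
  simp [incl, Matrix.mulVec, dotProduct, fun i => Ne.symm (hj i)]

theorem incl_one_apply_ne_zero {s : α → F2} {j : β} (h : incl ι s j ≠ 0) : incl ι 1 j ≠ 0 := by
  by_cases hj : j ∈ Set.range ι
  · obtain ⟨i, rfl⟩ := hj
    simp [incl_apply_self]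
  · exact absurd (incl_apply_of_notMem_range ι s hj) h

end incl

theorem H₀.mk_incl_eq_mk_incl_one {α β M₁ M : Type} [Fintype α] [DecidableEq β]
    [AddCommGroup M₁] [AddCommGroup M] [Module F2 M₁] [Module F2 M]
    {d₀ : M₁ →ₗ[F2] (β → F2)} {d : (β → F2) →ₗ[F2] M} {ι : α ↪ β}
    (hsep : ∀ u' : β → F2, u' ∈ ker d → u' ∉ range d₀ →
      (∀ j, u' j ≠ 0 → incl ι 1 j ≠ 0) → u' + incl ι 1 ∈ range d₀)
    (hu : incl ι 1 ∈ ker d) {s : α → F2} (hs : incl ι s ∈ ker d) (hs' : incl ι s ∉ range d₀) :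
    (Submodule.Quotient.mk ⟨incl ι s, hs⟩ : H₀ d₀ d) = Submodule.Quotient.mk ⟨incl ι 1, hu⟩ :=
  (H₀.mk_eq_mk_iff _ _).2 <| by
    rw [ZModModule.sub_eq_add]
    exact hsep _ hs hs' fun _ => incl_one_apply_ne_zero ι

theorem H₀.mk_incl_prod_eq_zero_or_eq {T SC SD C₁ Cₘ D₁ Dₘ : Type} [Fintype T]
    [DecidableEq SC] [DecidableEq SD] [AddCommGroup C₁] [AddCommGroup Cₘ] [AddCommGroup D₁]
    [AddCommGroup Dₘ] [Module F2 C₁] [Module F2 Cₘ] [Module F2 D₁] [Module F2 Dₘ]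
    {dC₀ : C₁ →ₗ[F2] (SC → F2)} {dCₘ : (SC → F2) →ₗ[F2] Cₘ}
    {dD₀ : D₁ →ₗ[F2] (SD → F2)} {dDₘ : (SD → F2) →ₗ[F2] Dₘ} {ιC : T ↪ SC} {ιD : T ↪ SD}
    (hsepC : ∀ u' : SC → F2, u' ∈ ker dCₘ → u' ∉ range dC₀ →
      (∀ j, u' j ≠ 0 → incl ιC 1 j ≠ 0) → u' + incl ιC 1 ∈ range dC₀)
    (hsepD : ∀ v' : SD → F2, v' ∈ ker dDₘ → v' ∉ range dD₀ →
      (∀ j, v' j ≠ 0 → incl ιD 1 j ≠ 0) → v' + incl ιD 1 ∈ range dD₀)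
    (hsep3 : ∀ s : T → F2,
      (incl ιC s ∈ ker dCₘ ∧ incl ιC s ∉ range dC₀) ↔ (incl ιD s ∈ ker dDₘ ∧ incl ιD s ∉ range dD₀))
    (hu : incl ιC 1 ∈ ker dCₘ) (hv : incl ιD 1 ∈ ker dDₘ)
    {s : T → F2} (hsC : incl ιC s ∈ ker dCₘ) (hsD : incl ιD s ∈ ker dDₘ) :
    ((Submodule.Quotient.mk ⟨incl ιC s, hsC⟩, Submodule.Quotient.mk ⟨incl ιD s, hsD⟩) :
        H₀ dC₀ dCₘ × H₀ dD₀ dDₘ) = 0 ∨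
      ((Submodule.Quotient.mk ⟨incl ιC s, hsC⟩, Submodule.Quotient.mk ⟨incl ιD s, hsD⟩) :
        H₀ dC₀ dCₘ × H₀ dD₀ dDₘ) =
        (Submodule.Quotient.mk ⟨incl ιC 1, hu⟩, Submodule.Quotient.mk ⟨incl ιD 1, hv⟩) := by
  by_cases hbC : incl ιC s ∈ range dC₀
  · have hbD : incl ιD s ∈ range dD₀ := by
      by_contra hbD
      exact ((hsep3 s).2 ⟨hsD, hbD⟩).2 hbC
    exact .inl (Prod.ext ((H₀.mk_eq_zero_iff _).2 hbC) ((H₀.mk_eq_zero_iff _).2 hbD))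
  · have hbD := ((hsep3 s).1 ⟨hsC, hbC⟩).2
    exact .inr (Prod.ext (H₀.mk_incl_eq_mk_incl_one hsepC hu hsC hbC)
      (H₀.mk_incl_eq_mk_incl_one hsepD hv hsD hbD))

theorem separated_Zbar_merge_homology_map
    {SC1 SC0 SCm SD1 SD0 SDm T0 : Type}
    [Fintype T0]
    [DecidableEq SC0] [DecidableEq SD0]
    (dC0 : (SC1 → F2) →ₗ[F2] (SC0 → F2)) (dCm : (SC0 → F2) →ₗ[F2] (SCm → F2))
    (dD0 : (SD1 → F2) →ₗ[F2] (SD0 → F2)) (dDm : (SD0 → F2) →ₗ[F2] (SDm → F2))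
    (hC : dCm ∘ₗ dC0 = 0) (hD : dDm ∘ₗ dD0 = 0)
    (ιC : T0 ↪ SC0) (ιD : T0 ↪ SD0)
    (hu : incl ιC 1 ∈ LinearMap.ker dCm) (hu' : incl ιC 1 ∉ LinearMap.range dC0)
    (hv : incl ιD 1 ∈ LinearMap.ker dDm)
    (hsepC : ∀ u' : SC0 → F2, u' ∈ LinearMap.ker dCm → u' ∉ LinearMap.range dC0 →
      (∀ j, u' j ≠ 0 → incl ιC 1 j ≠ 0) → u' + incl ιC 1 ∈ LinearMap.range dC0)
    (hsepD : ∀ v' : SD0 → F2, v' ∈ LinearMap.ker dDm → v' ∉ LinearMap.range dD0 →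
      (∀ j, v' j ≠ 0 → incl ιD 1 j ≠ 0) → v' + incl ιD 1 ∈ LinearMap.range dD0)
    (hsep3 : ∀ s : T0 → F2,
      (incl ιC s ∈ LinearMap.ker dCm ∧ incl ιC s ∉ LinearMap.range dC0) ↔
      (incl ιD s ∈ LinearMap.ker dDm ∧ incl ιD s ∉ LinearMap.range dD0))
    (dQm : (((SC0 → F2) × (SD0 → F2)) ⧸
        LinearMap.range ((incl ιC).prod (incl ιD))) →ₗ[F2]
      (((SCm → F2) × (SDm → F2)) ⧸
        LinearMap.range ((dCm ∘ₗ incl ιC).prod (dDm ∘ₗ incl ιD))))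
    (hdQm : dQm ∘ₗ (LinearMap.range ((incl ιC).prod (incl ιD))).mkQ =
      (LinearMap.range ((dCm ∘ₗ incl ιC).prod (dDm ∘ₗ incl ιD))).mkQ ∘ₗ
        (dCm.prodMap dDm)) :
    -- coeq₀ maps cycles of C ⊕ D to cycles of Q
    (∀ x ∈ LinearMap.ker (dCm.prodMap dDm),
      (LinearMap.range ((incl ιC).prod (incl ιD))).mkQ x ∈ LinearMap.ker dQm) ∧
    -- coeq₀ maps boundaries of C ⊕ D to boundaries of Q
    (∀ x ∈ LinearMap.range (dC0.prodMap dD0),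
      (LinearMap.range ((incl ιC).prod (incl ιD))).mkQ x ∈
        LinearMap.range
          ((LinearMap.range ((incl ιC).prod (incl ιD))).mkQ ∘ₗ (dC0.prodMap dD0))) ∧
    -- hence coeq₀ induces a map H₀(C) ⊕ H₀(D) → H₀(Q), which is surjective
    -- with kernel spanned by ([u],[v])
    (∀ φ : ((LinearMap.ker dCm ⧸
          ((LinearMap.range dC0).comap (LinearMap.ker dCm).subtype :
            Submodule F2 (LinearMap.ker dCm))) ×
        (LinearMap.ker dDm ⧸
          ((LinearMap.range dD0).comap (LinearMap.ker dDm).subtype :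
            Submodule F2 (LinearMap.ker dDm)))) →ₗ[F2]
        (LinearMap.ker dQm ⧸
          ((LinearMap.range
              ((LinearMap.range ((incl ιC).prod (incl ιD))).mkQ ∘ₗ (dC0.prodMap dD0))).comap
            (LinearMap.ker dQm).subtype :
            Submodule F2 (LinearMap.ker dQm))),
      (∀ (a : LinearMap.ker dCm) (b : LinearMap.ker dDm) (x : LinearMap.ker dQm),
        (x : ((SC0 → F2) × (SD0 → F2)) ⧸ LinearMap.range ((incl ιC).prod (incl ιD))) =
          (LinearMap.range ((incl ιC).prod (incl ιD))).mkQ ((a : SC0 → F2), (b : SD0 → F2)) →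
        φ (Submodule.Quotient.mk a, Submodule.Quotient.mk b) = Submodule.Quotient.mk x) →
      Function.Surjective φ ∧
      LinearMap.ker φ =
        Submodule.span F2
          {(Submodule.Quotient.mk ⟨incl ιC 1, hu⟩, Submodule.Quotient.mk ⟨incl ιD 1, hv⟩)} ∧
      Module.finrank F2 (LinearMap.ker φ) = 1) := by
  refine ⟨fun x hx => gluing_mkQ_mem_ker_of_mem_ker hdQm hx,
    fun x ⟨y, hy⟩ => ⟨y, by rw [comp_apply, hy]⟩, fun φ hφ => ?_⟩
  have mem_ker_φ := IsInducedOnH₀.mem_ker_iff hC hD hdQm hφ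
  have hker : ker φ = span F2
      {(Submodule.Quotient.mk ⟨incl ιC 1, hu⟩, Submodule.Quotient.mk ⟨incl ιD 1, hv⟩)} := by
    refine le_antisymm (fun z hz => ?_) ((span_singleton_le_iff_mem _ _).2
      ((mem_ker_φ _).2 ⟨1, hu, hv, rfl⟩))
    obtain ⟨s, hsC, hsD, rfl⟩ := (mem_ker_φ _).1 hz
    rcases H₀.mk_incl_prod_eq_zero_or_eq hsepC hsepD hsep3 hu hv hsC hsD with h | h <;> rw [h]
    exacts [zero_mem _, mem_span_singleton_self _]
  refine ⟨IsInducedOnH₀.surjective hdQm hφ, hker, ?_⟩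
  rw [hker]
  exact finrank_span_singleton fun h => hu' ((H₀.mk_eq_zero_iff _).1 (congrArg Prod.fst h))
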